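/- Let S : ℝ → [0,∞) be Borel measurable, even (S(−ξ) = S(ξ)), with S(0) = 0, and convex on (−ε, ε) for some ε > 0. If ∫_{{|ξ|<r}} dξ / S(ξ) = ∞ for every r > 0, then for every 0 ≤ α < 1 one has lim_{ξ→0} S(ξ)/|ξ|^α = 0; consequently the Pruitt index β := sup{α ≥ 0 : lim_{ξ→0} S(ξ)/|ξ|^α = 0} satisfies β ≥ 1. -/

import Mathlib

/-!
A convex function vanishing at the origin lies below its chords from the origin, so near `0` it
is bounded by `C * |ξ|`. Hence `S ξ / |ξ| ^ α ≤ C * |ξ| ^ (1 - α) → 0` for every `α < 1`, and the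
supremum defining `β` contains every `α ∈ [0, 1)`.
-/

open Filter Topology Set
open scoped ENNReal

theorem ConvexOn.le_mul_of_map_zero {E : Type*} [AddCommGroup E] [Module ℝ E] {s : Set E}
    {f : E → ℝ} (hf : ConvexOn ℝ s f) (h0 : (0 : E) ∈ s) (hf0 : f 0 = 0) {y : E} (hy : y ∈ s)
    {t : ℝ} (ht0 : 0 ≤ t) (ht1 : t ≤ 1) : f (t • y) ≤ t * f y := by
  simpa [hf0] using hf.2 h0 hy (sub_nonneg.2 ht1) ht0 (by ring)

theorem ConvexOn.exists_eventually_le_mul_abs {s : Set ℝ} {f : ℝ → ℝ} (hf : ConvexOn ℝ s f)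
    (hs : s ∈ 𝓝 0) (hf0 : f 0 = 0) : ∃ C, ∀ᶠ x in 𝓝 0, f x ≤ C * |x| := by
  obtain ⟨η, hη, hball⟩ := Metric.nhds_basis_closedBall.mem_iff.1 hs
  have hmem : ∀ y, |y| ≤ η → y ∈ s := fun y hy => hball (by simpa using hy)
  have h0 : (0 : ℝ) ∈ s := hmem 0 (by simpa using hη.le)
  refine ⟨max (f η) (f (-η)) / η, ?_⟩
  filter_upwards [Icc_mem_nhds (neg_neg_iff_pos.2 hη) hη] with x hx
  have hxη : |x| ≤ η := abs_le.2 hx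
  set t := |x| / η
  have ht0 : 0 ≤ t := by positivity
  have ht1 : t ≤ 1 := (div_le_one hη).2 hxη
  have hCx : max (f η) (f (-η)) / η * |x| = t * max (f η) (f (-η)) := by
    simp only [t]; ring
  have hx_eq : x = t • η ∨ x = t • -η := by
    rcases abs_cases x with ⟨habs, -⟩ | ⟨habs, -⟩
    · left; simp only [t, habs, smul_eq_mul, div_mul_cancel₀ _ hη.ne']
    · right; simp only [t, habs, smul_eq_mul]; field_simp
  rw [hCx]
  rcases hx_eq with hx_eq | hx_eq <;> rw [hx_eq]
  · exact (hf.le_mul_of_map_zero h0 hf0 (hmem η (by rw [abs_of_pos hη])) ht0 ht1).trans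
      (mul_le_mul_of_nonneg_left (le_max_left _ _) ht0)
  · exact (hf.le_mul_of_map_zero h0 hf0 (hmem (-η) (by rw [abs_neg, abs_of_pos hη])) ht0
      ht1).trans (mul_le_mul_of_nonneg_left (le_max_right _ _) ht0)

theorem tendsto_ofReal_div_rpow_abs_of_le_mul_abs {f : ℝ → ℝ} {C α : ℝ}
    (hf : ∀ᶠ x in 𝓝 0, f x ≤ C * |x|) (hα : α < 1) :
    Tendsto (fun x => ENNReal.ofReal (f x) / ENNReal.ofReal (|x| ^ α)) (𝓝[≠] 0) (𝓝 0) := by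
  have h1α : 0 < 1 - α := sub_pos.2 hα
  have hbound : Tendsto (fun x : ℝ => C * |x| ^ (1 - α)) (𝓝 0) (𝓝 0) := by
    simpa [Real.zero_rpow h1α.ne'] using
      ((continuous_abs.rpow_const fun _ => Or.inr h1α.le).const_mul C).tendsto 0
  have hle : ∀ᶠ x in 𝓝[≠] 0, ENNReal.ofReal (f x) / ENNReal.ofReal (|x| ^ α)
      ≤ ENNReal.ofReal (C * |x| ^ (1 - α)) := by
    filter_upwards [nhdsWithin_le_nhds hf, self_mem_nhdsWithin] with x hfx hx
    have hx : 0 < |x| := abs_pos.2 hx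
    calc ENNReal.ofReal (f x) / ENNReal.ofReal (|x| ^ α)
        ≤ ENNReal.ofReal (C * |x|) / ENNReal.ofReal (|x| ^ α) := by gcongr
      _ = ENNReal.ofReal (C * |x| ^ (1 - α)) := by
        rw [← ENNReal.ofReal_div_of_pos (Real.rpow_pos_of_pos hx α), Real.rpow_sub hx,
          Real.rpow_one, mul_div_assoc]
  refine tendsto_of_tendsto_of_tendsto_of_le_of_le' tendsto_const_nhds ?_
    (Eventually.of_forall fun _ => zero_le) hle
  simpa using (ENNReal.tendsto_ofReal hbound).mono_left nhdsWithin_le_nhds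

theorem ENNReal.ofReal_le_iSup_ofReal_of_forall_lt {P : ℝ → Prop} {a : ℝ} (ha : 0 < a)
    (hP : ∀ α, 0 ≤ α → α < a → P α) :
    ENNReal.ofReal a ≤ ⨆ (α : ℝ) (_ : 0 ≤ α) (_ : P α), ENNReal.ofReal α := by
  refine le_of_tendsto ((ENNReal.continuous_ofReal.tendsto a).mono_left
    (nhdsWithin_le_nhds (s := Iio a))) ?_
  filter_upwards [Ico_mem_nhdsLT ha] with α hα
  exact le_iSup_of_le α (le_iSup_of_le hα.1 (le_iSup_of_le (hP α hα.1 hα.2) le_rfl))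

theorem stmt6 (S : ℝ → ℝ)
    (hS0 : S 0 = 0)
    (ε : ℝ) (hε : 0 < ε)
    (hconv : ConvexOn ℝ (Set.Ioo (-ε) ε) S)
    (β : ℝ≥0∞)
    (hβ : β = ⨆ (α : ℝ) (_ : 0 ≤ α)
      (_ : Tendsto (fun ξ => ENNReal.ofReal (S ξ) / ENNReal.ofReal (|ξ| ^ α))
        (𝓝[≠] (0 : ℝ)) (𝓝 0)), ENNReal.ofReal α) :
    (∀ α : ℝ, 0 ≤ α → α < 1 →
      Tendsto (fun ξ => ENNReal.ofReal (S ξ) / ENNReal.ofReal (|ξ| ^ α))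
        (𝓝[≠] (0 : ℝ)) (𝓝 0)) ∧
    (1 : ℝ≥0∞) ≤ β := by
  obtain ⟨C, hC⟩ := hconv.exists_eventually_le_mul_abs
    (Ioo_mem_nhds (neg_neg_iff_pos.2 hε) hε) hS0
  have hlim : ∀ α : ℝ, 0 ≤ α → α < 1 →
      Tendsto (fun ξ => ENNReal.ofReal (S ξ) / ENNReal.ofReal (|ξ| ^ α))
        (𝓝[≠] (0 : ℝ)) (𝓝 0) :=
    fun _ _ hα => tendsto_ofReal_div_rpow_abs_of_le_mul_abs hC hα
  refine ⟨hlim, ?_⟩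
  rw [hβ, ← ENNReal.ofReal_one]
  exact ENNReal.ofReal_le_iSup_ofReal_of_forall_lt one_pos hlim
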